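/- For a 3×3 symmetric traceless real matrix T with |T|² ≤ 6 (Frobenius norm squared), one has 6|T|² + 18·det(T) ≥ (6 − √6·|T|)·|T|² ≥ 0; in particular 6|T|² + 18·det(T) ≥ 0. -/
import Mathlib


open Real Finset

lemma cubic_aux (a b c : ℝ) (h : a + b + c = 0) :
    54 * (a * b * c) ^ 2 ≤ (a ^ 2 + b ^ 2 + c ^ 2) ^ 3 := by
  have hc : c = -a - b := by linarith
  subst hc
  nlinarith [sq_nonneg ((a - b) * (2 * a + b) * (a + 2 * b))]

lemma eig_estimate (a b c s : ℝ) (h : a + b + c = 0)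
    (hs : s = a ^ 2 + b ^ 2 + c ^ 2) (hle : s ≤ 6) :
    6 * s + 18 * (a * b * c) ≥ (6 - Real.sqrt 6 * Real.sqrt s) * s ∧
    (6 - Real.sqrt 6 * Real.sqrt s) * s ≥ 0 := by
  have hs0 : 0 ≤ s := by rw [hs]; positivity
  set m : ℝ := Real.sqrt 6 * Real.sqrt s with hm
  have hm0 : 0 ≤ m := mul_nonneg (Real.sqrt_nonneg _) (Real.sqrt_nonneg _)
  have hm2 : m ^ 2 = 6 * s := by
    rw [hm, mul_pow, sq_sqrt (by norm_num : (6:ℝ) ≥ 0), sq_sqrt hs0]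
  have hcub : 54 * (a * b * c) ^ 2 ≤ s ^ 3 := by rw [hs]; exact cubic_aux a b c h
  constructor
  · have hms : (m * s) ^ 2 = 6 * s ^ 3 := by rw [mul_pow, hm2]; ring
    have key : (18 * (a * b * c)) ^ 2 ≤ (m * s) ^ 2 := by nlinarith
    nlinarith [mul_nonneg hm0 hs0]
  · have : m ≤ 6 := by nlinarith
    have : 0 ≤ 6 - m := by linarith
    exact mul_nonneg this hs0

/-- For a 3×3 symmetric traceless real matrix `T` with Frobenius norm squared
`|T|² ≤ 6`, one has `6|T|² + 18·det T ≥ (6 − √6·|T|)·|T|² ≥ 0`. -/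
theorem traceless_ricci_cubic_estimate
    (T : Matrix (Fin 3) (Fin 3) ℝ) (hsymm : T.IsSymm) (htr : T.trace = 0)
    (nrm2 : ℝ) (hnrm2 : nrm2 = ∑ i : Fin 3, ∑ j : Fin 3, (T i j) ^ 2)
    (hle : nrm2 ≤ 6) :
    6 * nrm2 + 18 * T.det ≥ (6 - Real.sqrt 6 * Real.sqrt nrm2) * nrm2 ∧
    (6 - Real.sqrt 6 * Real.sqrt nrm2) * nrm2 ≥ 0 := by
  have hH : T.IsHermitian := by
    ext i j
    simpa [Matrix.conjTranspose_apply] using congrFun (congrFun hsymm i) j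
  set U : Matrix (Fin 3) (Fin 3) ℝ := (hH.eigenvectorUnitary : Matrix (Fin 3) (Fin 3) ℝ) with hUdef
  set D : Matrix (Fin 3) (Fin 3) ℝ :=
    Matrix.diagonal (RCLike.ofReal ∘ hH.eigenvalues) with hDdef
  have hU1 : star U * U = 1 := (Matrix.mem_unitaryGroup_iff').mp hH.eigenvectorUnitary.2
  have hU2 : U * star U = 1 := (Matrix.mem_unitaryGroup_iff).mp hH.eigenvectorUnitary.2
  have hT : T = U * D * star U := hH.spectral_theorem
  -- trace of T is the sum of eigenvalues
  have htrace : T.trace = ∑ i, hH.eigenvalues i := by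
    conv_lhs => rw [hT]
    rw [Matrix.trace_mul_cycle, hU1, Matrix.one_mul, hDdef,
      Matrix.trace_diagonal]
    simp
  -- the Frobenius norm squared is the sum of squared eigenvalues
  have hTT : T * T = U * (D * D) * star U := by
    rw [hT]
    calc U * D * star U * (U * D * star U)
        = U * D * (star U * U) * D * star U := by
          simp only [Matrix.mul_assoc]
      _ = U * (D * D) * star U := by rw [hU1]; simp only [Matrix.mul_one, Matrix.mul_assoc]
  have hnrm2' : nrm2 = ∑ i, hH.eigenvalues i ^ 2 := by
    have h1 : (T * T).trace = ∑ i, hH.eigenvalues i ^ 2 := by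
      conv_lhs => rw [hTT]
      rw [Matrix.trace_mul_cycle, hU1, Matrix.one_mul, hDdef,
        Matrix.diagonal_mul_diagonal, Matrix.trace_diagonal]
      simp [sq]
    have h2 : (T * T).trace = ∑ i : Fin 3, ∑ j : Fin 3, (T i j) ^ 2 := by
      rw [Matrix.trace]
      simp only [Matrix.diag_apply, Matrix.mul_apply]
      refine Finset.sum_congr rfl fun i _ => Finset.sum_congr rfl fun j _ => ?_
      rw [sq, hsymm.apply i j]
    rw [hnrm2, ← h2, h1]
  -- determinant is the product of eigenvalues
  have hdet : T.det = ∏ i, hH.eigenvalues i := by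
    simpa using hH.det_eq_prod_eigenvalues
  set a := hH.eigenvalues 0
  set b := hH.eigenvalues 1
  set c := hH.eigenvalues 2
  have hsum : a + b + c = 0 := by
    rw [htrace, Fin.sum_univ_three] at htr; exact htr
  have hs : nrm2 = a ^ 2 + b ^ 2 + c ^ 2 := by
    rw [hnrm2', Fin.sum_univ_three]
  have hd : T.det = a * b * c := by
    rw [hdet, Fin.prod_univ_three]
  rw [hd]
  exact eig_estimate a b c nrm2 hsum hs hle
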